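/- Let C be a commutative ring and A an Azumaya algebra over C. Then A satisfies PP and SPSP: the union of every ascending chain of prime two-sided ideals of A is a prime two-sided ideal, and the union of every ascending chain of semiprime two-sided ideals of A is a semiprime two-sided ideal. -/
import Mathlib

/-- A two-sided ideal `P` of a ring `R` is prime if `P ≠ R` and
`aRb ⊆ P` implies `a ∈ P` or `b ∈ P`. -/
def IsPrimeTSI {R : Type*} [Ring R] (P : TwoSidedIdeal R) : Prop :=
  P ≠ ⊤ ∧ ∀ a b : R, (∀ r : R, a * r * b ∈ P) → a ∈ P ∨ b ∈ P

/-- A two-sided ideal `P` of a ring `R` is semiprime if `aRa ⊆ P` implies `a ∈ P`. -/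
def IsSemiprimeTSI {R : Type*} [Ring R] (P : TwoSidedIdeal R) : Prop :=
  ∀ a : R, (∀ r : R, a * r * a ∈ P) → a ∈ P

/-- The natural map `A ⊗[C] Aᵐᵒᵖ → End_C(A)`, sending `a ⊗ b` to `x ↦ a * x * b`. -/
noncomputable def mulLeftRightMap (C A : Type*) [CommRing C] [Ring A] [Algebra C A] :
    TensorProduct C A Aᵐᵒᵖ →ₗ[C] Module.End C A :=
  TensorProduct.lift <| LinearMap.mk₂ C
    (fun a b => (LinearMap.mulLeft C a) ∘ₗ (LinearMap.mulRight C b.unop))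
    (fun a₁ a₂ b => by ext x; simp [add_mul])
    (fun c a b => by ext x; simp [smul_mul_assoc])
    (fun a b₁ b₂ => by ext x; simp [mul_add])
    (fun c a b => by ext x; simp [mul_smul_comm])

/-- If the middle factor belongs to finitely many generators' membership, then
all sandwiches lie in `P`. -/
lemma sandwich_mem {C A : Type*} [CommRing C] [Ring A] [Algebra C A]
    {n : ℕ} {s : Fin n → A} (hs : Submodule.span C (Set.range s) = ⊤)
    (P : TwoSidedIdeal A) (a b : A) (h : ∀ j, a * s j * b ∈ P) :
    ∀ r : A, a * r * b ∈ P := by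
  intro r
  have hr : r ∈ Submodule.span C (Set.range s) := hs ▸ Submodule.mem_top
  induction hr using Submodule.span_induction with
  | mem x hx => obtain ⟨j, rfl⟩ := hx; exact h j
  | zero => simpa using P.zero_mem
  | add x y _ _ hx hy =>
      have : a * (x + y) * b = a * x * b + a * y * b := by
        rw [mul_add, add_mul]
      rw [this]; exact P.add_mem hx hy
  | smul c x _ hx =>
      have : a * (c • x) * b = c • (a * x * b) := by
        rw [mul_smul_comm, smul_mul_assoc]
      rw [this, Algebra.smul_def]; exact P.mul_mem_left _ _ hx

theorem stmt_19 (C A : Type*) [CommRing C] [Ring A] [Algebra C A]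
    [FaithfulSMul C A] [Module.Finite C A] [Module.Projective C A]
    (hAz : Function.Bijective (mulLeftRightMap C A)) :
    (∀ P : ℕ → TwoSidedIdeal A, Monotone P → (∀ n, IsPrimeTSI (P n)) →
      ∃ Q : TwoSidedIdeal A, (Q : Set A) = (⋃ n, (P n : Set A)) ∧ IsPrimeTSI Q) ∧
    (∀ P : ℕ → TwoSidedIdeal A, Monotone P → (∀ n, IsSemiprimeTSI (P n)) →
      ∃ Q : TwoSidedIdeal A, (Q : Set A) = (⋃ n, (P n : Set A)) ∧ IsSemiprimeTSI Q) := by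
  obtain ⟨n, s, hs⟩ := Module.Finite.exists_fin (R := C) (M := A)
  -- construct the union ideal for any monotone chain
  have mkQ : ∀ P : ℕ → TwoSidedIdeal A, Monotone P →
      ∃ Q : TwoSidedIdeal A, (Q : Set A) = (⋃ n, (P n : Set A)) := by
    intro P hP
    refine ⟨TwoSidedIdeal.mk' (⋃ n, (P n : Set A))
      (Set.mem_iUnion.2 ⟨0, (P 0).zero_mem⟩)
      (fun {x y} hx hy => ?_)
      (fun {x} hx => ?_)
      (fun {x y} hy => ?_)
      (fun {x y} hx => ?_), TwoSidedIdeal.coe_mk' _ _ _ _ _ _⟩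
    · obtain ⟨i, hi⟩ := Set.mem_iUnion.1 hx
      obtain ⟨j, hj⟩ := Set.mem_iUnion.1 hy
      exact Set.mem_iUnion.2 ⟨max i j, (P _).add_mem (hP (le_max_left i j) hi)
        (hP (le_max_right i j) hj)⟩
    · obtain ⟨i, hi⟩ := Set.mem_iUnion.1 hx
      exact Set.mem_iUnion.2 ⟨i, (P i).neg_mem hi⟩
    · obtain ⟨i, hi⟩ := Set.mem_iUnion.1 hy
      exact Set.mem_iUnion.2 ⟨i, (P i).mul_mem_left _ _ hi⟩
    · obtain ⟨i, hi⟩ := Set.mem_iUnion.1 hx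
      exact Set.mem_iUnion.2 ⟨i, (P i).mul_mem_right _ _ hi⟩
  -- given a sandwich condition in the union, get a uniform index
  have key : ∀ (P : ℕ → TwoSidedIdeal A), Monotone P → ∀ (Q : TwoSidedIdeal A),
      (Q : Set A) = (⋃ n, (P n : Set A)) → ∀ a b : A,
      (∀ r : A, a * r * b ∈ Q) → ∃ N, ∀ r : A, a * r * b ∈ P N := by
    intro P hP Q hQ a b h
    have h' : ∀ j : Fin n, ∃ i, a * s j * b ∈ P i := by
      intro j
      have := h (s j)
      rw [← SetLike.mem_coe, hQ] at this
      exact Set.mem_iUnion.1 this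
    choose f hf using h'
    classical
    obtain ⟨N, hN⟩ : ∃ N, ∀ j, f j ≤ N := by
      rcases isEmpty_or_nonempty (Fin n) with he | hne
      · exact ⟨0, fun j => (he.false j).elim⟩
      · exact ⟨Finset.univ.sup f, fun j => Finset.le_sup (Finset.mem_univ j)⟩
    exact ⟨N, sandwich_mem hs (P N) a b (fun j => hP (hN j) (hf j))⟩
  constructor
  · intro P hP hprime
    obtain ⟨Q, hQ⟩ := mkQ P hP
    refine ⟨Q, hQ, ?_, ?_⟩
    · intro htop
      have : (1 : A) ∈ Q := htop ▸ trivial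
      rw [← SetLike.mem_coe, hQ] at this
      obtain ⟨i, hi⟩ := Set.mem_iUnion.1 this
      exact (hprime i).1 (TwoSidedIdeal.one_mem_iff _ |>.1 hi)
    · intro a b hab
      obtain ⟨N, hN⟩ := key P hP Q hQ a b hab
      rcases (hprime N).2 a b hN with h | h
      · exact Or.inl (by rw [← SetLike.mem_coe, hQ]; exact Set.mem_iUnion.2 ⟨N, h⟩)
      · exact Or.inr (by rw [← SetLike.mem_coe, hQ]; exact Set.mem_iUnion.2 ⟨N, h⟩)
  · intro P hP hsemi
    obtain ⟨Q, hQ⟩ := mkQ P hP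
    refine ⟨Q, hQ, ?_⟩
    intro a ha
    obtain ⟨N, hN⟩ := key P hP Q hQ a a ha
    have := hsemi N a hN
    rw [← SetLike.mem_coe, hQ]
    exact Set.mem_iUnion.2 ⟨N, this⟩
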